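/- arXiv:math/9905028 — 5 statements merged into one kernel-verified Lean document; each statement's English description precedes it below -/
import Mathlib

section
/- Let (p_α)_{α∈Π} be a family in ℂ* and σ an involution of the finite set Π such that conjugate(p_{σ(α)}) = p_α^{-1} for all α ∈ Π, and suppose p_α = p_{φ(α)} for a bijection φ : Π₁ → Π₂ satisfying condition (iii). Then there exists a family (h_α)_{α∈Π} in ℂ* that is constant on maximal chains of Π₀ = Π₁ ∪ Π₂ and satisfies p_α = conjugate(h_{σ(α)})^{-1} · h_α for all α ∈ Π. -/
/-- The Belavin–Drinfeld order: `a < b` iff `b = φᵏ(a)` for some `k ≥ 1`, all the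
intermediate iterates `a, φ(a), …, φ^{k-1}(a)` lying in `Π₁` (so that each application
of the partial map `φ` is defined). -/
def bdLt {α : Type*} (φ : α → α) (P1 : Set α) (a b : α) : Prop :=
  ∃ k : ℕ, 0 < k ∧ (∀ i < k, φ^[i] a ∈ P1) ∧ φ^[k] a = b

/-- Condition (iii): every `α ∈ Π₁` eventually leaves `Π₁` under iteration of `φ`. -/
def bdCondIII {α : Type*} (φ : α → α) (P1 : Set α) : Prop :=
  ∀ a ∈ P1, ∃ k : ℕ, 0 < k ∧ (∀ i, 0 < i → i < k → φ^[i] a ∈ P1) ∧ φ^[k] a ∉ P1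

/-- The maximal chain through `a`: all elements of `Π₀ = Π₁ ∪ Π₂` comparable to `a`. -/
def bdChain {α : Type*} (φ : α → α) (P1 P2 : Set α) (a : α) : Set α :=
  {b ∈ P1 ∪ P2 | b = a ∨ bdLt φ P1 a b ∨ bdLt φ P1 b a}

/-- `p` is constant along the Belavin–Drinfeld order. -/
lemma bd_p_const {α : Type*} {φ : α → α} {P1 : Set α} {p : α → ℂ}
    (hpφ : ∀ a ∈ P1, p a = p (φ a)) {a b : α} (hab : bdLt φ P1 a b) :
    p a = p b := by
  obtain ⟨k, -, hmem, hk⟩ := hab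
  subst hk
  induction k with
  | zero => rfl
  | succ n ih =>
    rw [ih (fun i hi => hmem i (by omega)), Function.iterate_succ_apply']
    exact hpφ _ (hmem n (by omega))

/-- given an involution `σ` of the finite set `Π` with
`conj (p_{σ(α)}) = p_α⁻¹` and `p_α = p_{φ(α)}` on `Π₁`, there is a family `(h_α)` of
nonzero complex numbers, constant on the maximal chains of `Π₀ = Π₁ ∪ Π₂`, with
`p_α = conj (h_{σ(α)})⁻¹ · h_α` for all `α`. -/
theorem bd_exists_h {α : Type*} [Fintype α] (P1 P2 : Set α) (φ σ : α → α)
    (hinj : Set.InjOn φ P1) (himg : φ '' P1 = P2) (hiii : bdCondIII φ P1)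
    (hinv : ∀ a, σ (σ a) = a) (hσ1 : σ '' P1 = P1) (hσ2 : σ '' P2 = P2)
    (hcomm : ∀ a ∈ P1, σ (φ a) = φ (σ a))
    (p : α → ℂ) (hp0 : ∀ a, p a ≠ 0)
    (hpσ : ∀ a, (starRingEnd ℂ) (p (σ a)) = (p a)⁻¹)
    (hpφ : ∀ a ∈ P1, p a = p (φ a)) :
    ∃ h : α → ℂ, (∀ a, h a ≠ 0) ∧
      (∀ a ∈ P1 ∪ P2, ∀ b ∈ bdChain φ P1 P2 a, h b = h a) ∧
      (∀ a, p a = ((starRingEnd ℂ) (h (σ a)))⁻¹ * h a) := by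
  classical
  -- the key formula: `p (σ a) = (conj (p a))⁻¹`
  have hpσ' : ∀ a, p (σ a) = ((starRingEnd ℂ) (p a))⁻¹ := by
    intro a
    have := congrArg (starRingEnd ℂ) (hpσ a)
    rwa [Complex.conj_conj, map_inv₀] at this
  refine ⟨fun a => if p a = -1 then Complex.I else 1 + p a, ?_, ?_, ?_⟩
  · intro a
    show (if p a = -1 then Complex.I else 1 + p a) ≠ 0
    by_cases hpa : p a = -1
    · simp [hpa, Complex.I_ne_zero]
    · simp only [hpa, if_false]
      intro h
      apply hpa
      linear_combination h
  · intro a _ b hb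
    have hpba : p b = p a := by
      rcases hb.2 with rfl | hlt | hlt
      · rfl
      · exact (bd_p_const hpφ hlt).symm
      · exact bd_p_const hpφ hlt
    simp [hpba]
  · intro a
    show p a = ((starRingEnd ℂ) (if p (σ a) = -1 then Complex.I else 1 + p (σ a)))⁻¹ *
      (if p a = -1 then Complex.I else 1 + p a)
    by_cases hpa : p a = -1
    · have hpsa : p (σ a) = -1 := by
        rw [hpσ', hpa]; norm_num
      rw [if_pos hpa, if_pos hpsa, hpa, Complex.conj_I, inv_neg, Complex.inv_I,
        neg_neg, Complex.I_mul_I]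
    · have hpsa : p (σ a) ≠ -1 := by
        intro h
        apply hpa
        have hthis := hpσ' a
        rw [h] at hthis
        rw [eq_comm, inv_eq_iff_eq_inv] at hthis
        have : (starRingEnd ℂ) (p a) = -1 := by
          rw [hthis]; norm_num
        have := congrArg (starRingEnd ℂ) this
        rwa [Complex.conj_conj, map_neg, map_one] at this
      rw [if_neg hpa, if_neg hpsa, hpσ']
      have h1 : (starRingEnd ℂ) (p a) ≠ 0 := by
        simpa using hp0 a
      rw [map_add, map_one, map_inv₀, Complex.conj_conj]
      have h2 : 1 + p a ≠ 0 := fun h => hpa (by linear_combination h)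
      have h3 : (1 : ℂ) + (p a)⁻¹ ≠ 0 := by
        rw [← one_div, one_add_div (hp0 a)]
        exact div_ne_zero (fun h => hpa (by linear_combination h)) (hp0 a)
      rw [inv_mul_eq_div, eq_div_iff h3, mul_add, mul_one, mul_inv_cancel₀ (hp0 a),
        add_comm]
end

section
/- Let g be a complex semisimple Lie algebra with root space decomposition, Δ its root system with simple roots Π, and let Π₁, Π₂ ⊆ Π with generated root subsystems Δ₁, Δ₂. If α ∈ Δ₁⁺ \ Δ₂⁺ and β ∈ Δ₂⁺ \ Δ₁⁺ are positive roots, then -α + β is not a root of g (equivalently [E_{-α}, E_β] = 0 for root vectors). -/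
open scoped Classical


/-- `γ` is a nonnegative-integer combination of the elements of the finite set `S`. -/
def isNNComb {V : Type*} [AddCommGroup V] [Module ℚ V] (S : Finset V) (γ : V) : Prop :=
  ∃ c : S → ℕ, γ = ∑ v : S, (c v : ℚ) • (v : V)

lemma sum_dite_eq {V : Type*} [AddCommGroup V] [Module ℚ V]
    (S T : Finset V) (c : {x // x ∈ S} → ℕ) :
    (∑ v : {x // x ∈ T}, ((if h : (v : V) ∈ S then c ⟨v, h⟩ else 0 : ℕ) : ℚ) • (v : V)) =
      ∑ x ∈ T, (if h : x ∈ S then (c ⟨x, h⟩ : ℚ) else 0) • x := by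
  rw [← Finset.sum_attach T (fun x => (if h : x ∈ S then (c ⟨x, h⟩ : ℚ) else 0) • x)]
  apply Finset.sum_congr rfl
  intro v _
  congr 1
  split <;> simp

lemma extend_comb {V : Type*} [AddCommGroup V] [Module ℚ V]
    (Pi S : Finset V) (hS : S ⊆ Pi) {γ : V} (h : isNNComb S γ) :
    ∃ c : {x // x ∈ Pi} → ℕ, γ = ∑ v : {x // x ∈ Pi}, (c v : ℚ) • (v : V) ∧
      ∀ v : {x // x ∈ Pi}, (v : V) ∉ S → c v = 0 := by
  obtain ⟨c, hc⟩ := h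
  refine ⟨fun v => if h : (v : V) ∈ S then c ⟨v, h⟩ else 0, ?_, ?_⟩
  · rw [sum_dite_eq S Pi c,
      ← Finset.sum_subset hS (fun x _ hx => by rw [dif_neg hx, zero_smul]),
      ← sum_dite_eq S S c, hc]
    apply Finset.sum_congr rfl
    intro v _
    rw [dif_pos v.2]
  · intro v hv; simp [hv]

lemma restrict_comb {V : Type*} [AddCommGroup V] [Module ℚ V]
    (Pi S : Finset V) (hS : S ⊆ Pi) {γ : V}
    (c : {x // x ∈ Pi} → ℕ) (hc : γ = ∑ v : {x // x ∈ Pi}, (c v : ℚ) • (v : V))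
    (hz : ∀ v : {x // x ∈ Pi}, (v : V) ∉ S → c v = 0) : isNNComb S γ := by
  refine ⟨fun v => c ⟨v, hS v.2⟩, ?_⟩
  have e1 : (∑ v : {x // x ∈ S}, ((c ⟨v, hS v.2⟩ : ℕ) : ℚ) • (v : V)) =
      ∑ x ∈ S, (if h : x ∈ Pi then (c ⟨x, h⟩ : ℚ) else 0) • x := by
    rw [← Finset.sum_attach S (fun x => (if h : x ∈ Pi then (c ⟨x, h⟩ : ℚ) else 0) • x)]
    apply Finset.sum_congr rfl
    intro v _
    rw [dif_pos (hS v.2)]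
  rw [e1, Finset.sum_subset hS (fun x hx hnx => by
      rw [dif_pos hx, hz ⟨x, hx⟩ hnx]; simp),
    ← sum_dite_eq Pi Pi c, hc]
  apply Finset.sum_congr rfl
  intro v _
  rw [dif_pos v.2]

lemma comb_ext {V : Type*} [AddCommGroup V] [Module ℚ V]
    (Pi : Finset V) (hind : LinearIndependent ℚ (fun v : {x // x ∈ Pi} => (v : V)))
    (a b : {x // x ∈ Pi} → ℚ)
    (h : ∑ v : {x // x ∈ Pi}, a v • (v : V) = ∑ v : {x // x ∈ Pi}, b v • (v : V)) :
    a = b := by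
  funext v
  have hz : ∑ v : {x // x ∈ Pi}, (a v - b v) • (v : V) = 0 := by
    simp only [sub_smul, Finset.sum_sub_distrib, h, sub_self]
  have := Fintype.linearIndependent_iff.mp hind (fun v => a v - b v) hz v
  linarith

/-- in a (semisimple) root system with simple roots `Π` (linearly
independent), where every positive root is a nonnegative integer combination of `Π`
and `Δ = Δ⁺ ∪ (-Δ⁺)`, if `α ∈ Δ₁⁺ \ Δ₂⁺` and `β ∈ Δ₂⁺ \ Δ₁⁺` (the positive roots
supported on `Π₁`, resp. `Π₂`), then `-α + β` is not a root. -/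
theorem neg_add_not_root
    {V : Type*} [AddCommGroup V] [Module ℚ V]
    (Pi : Finset V) (hind : LinearIndependent ℚ (fun v : {x // x ∈ Pi} => (v : V)))
    (Δpos : Set V) (hpos : ∀ γ ∈ Δpos, isNNComb Pi γ) (h0 : (0 : V) ∉ Δpos)
    (Δ : Set V) (hΔ : Δ = Δpos ∪ (-Δpos))
    (Pi1 Pi2 : Finset V) (h1 : Pi1 ⊆ Pi) (h2 : Pi2 ⊆ Pi)
    (Δ1pos Δ2pos : Set V)
    (hΔ1 : Δ1pos = {γ ∈ Δpos | isNNComb Pi1 γ})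
    (hΔ2 : Δ2pos = {γ ∈ Δpos | isNNComb Pi2 γ})
    (α β : V) (hα : α ∈ Δ1pos \ Δ2pos) (hβ : β ∈ Δ2pos \ Δ1pos) :
    -α + β ∉ Δ := by
  intro hmem
  rw [hΔ] at hmem
  have hα' := hα.1; rw [hΔ1] at hα'
  have hβ' := hβ.1; rw [hΔ2] at hβ'
  obtain ⟨hαpos, hα1⟩ := hα'
  obtain ⟨hβpos, hβ2⟩ := hβ'
  obtain ⟨a, ha, haz⟩ := extend_comb Pi Pi1 h1 hα1
  obtain ⟨b, hb, hbz⟩ := extend_comb Pi Pi2 h2 hβ2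
  rcases hmem with hγ | hγ
  · -- -α + β ∈ Δpos : then β = α + γ, so α is supported on Pi2
    obtain ⟨g, hg, _⟩ := extend_comb Pi Pi (le_refl _) (hpos _ hγ)
    have hβeq : β = α + (-α + β) := by abel
    have hsum : ∑ v : {x // x ∈ Pi}, ((a v : ℚ) + (g v : ℚ)) • (v : V) =
        ∑ v : {x // x ∈ Pi}, (b v : ℚ) • (v : V) := by
      simp only [add_smul, Finset.sum_add_distrib, ← ha, ← hg, ← hb]
      exact hβeq.symm
    have heq := comb_ext Pi hind _ _ hsum
    have hα2 : isNNComb Pi2 α := by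
      refine restrict_comb Pi Pi2 h2 a ha (fun v hv => ?_)
      have h1' : (a v : ℚ) + (g v : ℚ) = (b v : ℚ) := congrFun heq v
      rw [hbz v hv] at h1'
      have : (a v : ℚ) = 0 := by
        have ha' : (0:ℚ) ≤ (a v : ℚ) := by positivity
        have hg' : (0:ℚ) ≤ (g v : ℚ) := by positivity
        push_cast at h1'
        linarith
      exact_mod_cast this
    exact hα.2 (by rw [hΔ2]; exact ⟨hαpos, hα2⟩)
  · -- -α + β ∈ -Δpos : then α = β + γ, so β is supported on Pi1
    have hγ' : α - β ∈ Δpos := by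
      have := Set.mem_neg.mp hγ
      simpa [neg_add_rev, sub_eq_add_neg, add_comm] using this
    obtain ⟨g, hg, _⟩ := extend_comb Pi Pi (le_refl _) (hpos _ hγ')
    have hαeq : α = β + (α - β) := by abel
    have hsum : ∑ v : {x // x ∈ Pi}, ((b v : ℚ) + (g v : ℚ)) • (v : V) =
        ∑ v : {x // x ∈ Pi}, (a v : ℚ) • (v : V) := by
      simp only [add_smul, Finset.sum_add_distrib, ← hb, ← hg, ← ha]
      exact hαeq.symm
    have heq := comb_ext Pi hind _ _ hsum
    have hβ1 : isNNComb Pi1 β := by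
      refine restrict_comb Pi Pi1 h1 b hb (fun v hv => ?_)
      have h1' : (b v : ℚ) + (g v : ℚ) = (a v : ℚ) := congrFun heq v
      rw [haz v hv] at h1'
      have : (b v : ℚ) = 0 := by
        have hb' : (0:ℚ) ≤ (b v : ℚ) := by positivity
        have hg' : (0:ℚ) ≤ (g v : ℚ) := by positivity
        push_cast at h1'
        linarith
      exact_mod_cast this
    exact hβ.2 (by rw [hΔ1]; exact ⟨hβpos, hβ1⟩)
end

section
/- Let g be a complex semisimple Lie algebra, Π₁, Π₂ subsets of the simple roots, and m₁ = g₁ ∩ n₂⁻, m₂ = g₂ ∩ n₁⁺ (where gᵢ is the semisimple subalgebra generated by Πᵢ and nᵢ^± the nilradicals of the corresponding parabolics). Then [m₁, m₂] = 0, i.e., m₁ and m₂ commute elementwise. -/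
lemma isNNComb_iff' {V : Type*} [AddCommGroup V] [Module ℚ V] (S : Finset V) (γ : V) :
    isNNComb S γ ↔ ∃ d : V → ℕ, (∀ v, v ∉ S → d v = 0) ∧ γ = ∑ v ∈ S, (d v : ℚ) • v := by
  classical
  constructor
  · rintro ⟨c, hc⟩
    refine ⟨fun v => if h : v ∈ S then c ⟨v, h⟩ else 0, fun v hv => dif_neg hv, ?_⟩
    rw [hc, ← Finset.sum_coe_sort S (fun v => ((if h : v ∈ S then c ⟨v, h⟩ else 0 : ℕ) : ℚ) • v)]
    exact Finset.sum_congr rfl fun v _ => by rw [dif_pos v.2]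
  · rintro ⟨d, hd0, hd⟩
    refine ⟨fun v => d v, ?_⟩
    rw [hd, ← Finset.sum_coe_sort S (fun v => ((d v : ℕ) : ℚ) • v)]

lemma sandwich {V : Type*} [AddCommGroup V] [Module ℚ V] {Pi : Finset V}
    (hind : LinearIndependent ℚ (fun v : {x // x ∈ Pi} => (v : V)))
    {S : Finset V} (hS : S ⊆ Pi) {α β γ : V}
    (hα : isNNComb Pi α) (hβ : isNNComb S β) (hγ : isNNComb Pi γ)
    (heq : β = α + γ) : isNNComb S α := by
  obtain ⟨a, ha0, hαa⟩ := (isNNComb_iff' _ _).mp hα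
  obtain ⟨b, hb0, hβb⟩ := (isNNComb_iff' _ _).mp hβ
  obtain ⟨c, hc0, hγc⟩ := (isNNComb_iff' _ _).mp hγ
  have hβb' : β = ∑ v ∈ Pi, (b v : ℚ) • v := by
    rw [hβb]
    exact Finset.sum_subset hS (fun v _ hv => by rw [hb0 v hv, Nat.cast_zero, zero_smul])
  have hsum : ∑ v ∈ Pi, ((b v : ℚ) - a v - c v) • v = 0 := by
    simp only [sub_smul, Finset.sum_sub_distrib]
    rw [← hβb', ← hαa, ← hγc, heq]; abel
  have hcoef : ∀ v : {x // x ∈ Pi}, (b (v : V) : ℚ) - a v - c v = 0 := by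
    apply Fintype.linearIndependent_iff.mp hind
    rw [← hsum, ← Finset.sum_coe_sort Pi (fun v => ((b v : ℚ) - a v - c v) • v)]
  have hnat : ∀ v ∈ Pi, b v = a v + c v := by
    intro v hv
    have := hcoef ⟨v, hv⟩
    have : (b v : ℚ) = ((a v + c v : ℕ) : ℚ) := by push_cast; linarith
    exact_mod_cast this
  rw [isNNComb_iff']
  have hasupp : ∀ v, v ∉ S → a v = 0 := by
    intro v hv
    by_cases hvPi : v ∈ Pi
    · have hb := hb0 v hv
      have := hnat v hvPi
      omega
    · exact ha0 v hvPi
  refine ⟨a, hasupp, ?_⟩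
  rw [hαa]
  exact (Finset.sum_subset hS (fun v _ hv => by rw [hasupp v hv, Nat.cast_zero, zero_smul])).symm

/-- with `m₁ = g₁ ∩ n₂⁻` spanned by the root spaces `g_{-α}`,
`α ∈ Δ₁⁺ \ Δ₂⁺`, and `m₂ = g₂ ∩ n₁⁺` spanned by the `g_β`, `β ∈ Δ₂⁺ \ Δ₁⁺`,
one has `[m₁, m₂] = 0` elementwise. -/
theorem m1_m2_commute
    {V : Type*} [AddCommGroup V] [Module ℚ V]
    (Pi : Finset V) (hind : LinearIndependent ℚ (fun v : {x // x ∈ Pi} => (v : V)))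
    (Δpos : Set V) (hpos : ∀ γ ∈ Δpos, isNNComb Pi γ) (h0 : (0 : V) ∉ Δpos)
    (Δ : Set V) (hΔ : Δ = Δpos ∪ (-Δpos))
    (Pi1 Pi2 : Finset V) (h1 : Pi1 ⊆ Pi) (h2 : Pi2 ⊆ Pi)
    (Δ1pos Δ2pos : Set V)
    (hΔ1 : Δ1pos = {γ ∈ Δpos | isNNComb Pi1 γ})
    (hΔ2 : Δ2pos = {γ ∈ Δpos | isNNComb Pi2 γ})
    (g : Type*) [LieRing g] [LieAlgebra ℂ g]
    (gsp : V → Submodule ℂ g)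
    (hbr : ∀ a b : V, ∀ x ∈ gsp a, ∀ y ∈ gsp b, ⁅x, y⁆ ∈ gsp (a + b))
    (hbot : ∀ c : V, c ∉ Δ → c ≠ 0 → gsp c = ⊥)
    (m1 m2 : Submodule ℂ g)
    (hm1 : m1 = ⨆ α ∈ Δ1pos \ Δ2pos, gsp (-α))
    (hm2 : m2 = ⨆ β ∈ Δ2pos \ Δ1pos, gsp β) :
    ∀ x ∈ m1, ∀ y ∈ m2, ⁅x, y⁆ = 0 := by
  -- key vanishing lemma
  have key : ∀ α ∈ Δ1pos \ Δ2pos, ∀ β ∈ Δ2pos \ Δ1pos, gsp (-α + β) = ⊥ := by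
    rintro α ⟨hα1, hα2⟩ β ⟨hβ2, hβ1⟩
    have hαpos : α ∈ Δpos := by rw [hΔ1] at hα1; exact hα1.1
    have hβpos : β ∈ Δpos := by rw [hΔ2] at hβ2; exact hβ2.1
    have hα1' : isNNComb Pi1 α := by rw [hΔ1] at hα1; exact hα1.2
    have hβ2' : isNNComb Pi2 β := by rw [hΔ2] at hβ2; exact hβ2.2
    have hαn2 : ¬ isNNComb Pi2 α := by
      intro h; exact hα2 (by rw [hΔ2]; exact ⟨hαpos, h⟩)
    have hβn1 : ¬ isNNComb Pi1 β := by
      intro h; exact hβ1 (by rw [hΔ1]; exact ⟨hβpos, h⟩)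
    apply hbot
    · rw [hΔ]
      rintro (hmem | hmem)
      · -- β - α = γ ∈ Δpos, β = α + γ
        exact hαn2 (sandwich hind h2 (hpos α hαpos) hβ2' (hpos _ hmem) (by abel))
      · have hmem' : α - β ∈ Δpos := by
          have : -(-α + β) ∈ Δpos := Set.mem_neg.mp hmem
          simpa [neg_add, neg_neg, ← sub_eq_neg_add] using this
        exact hβn1 (sandwich hind h1 (hpos β hβpos) hα1' (hpos _ hmem') (by abel))
    · intro hz
      have : β = α := by
        have := hz
        have h' : α = β := by
          have : -α + β = 0 := hz
          linear_combination (norm := abel) -this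
        exact h'.symm
      exact hαn2 (this ▸ hβ2')
  subst hm1 hm2
  intro x hx y hy
  let P : Submodule ℂ g :=
    { carrier := {x | ∀ y ∈ (⨆ β ∈ Δ2pos \ Δ1pos, gsp β : Submodule ℂ g), ⁅x, y⁆ = 0}
      add_mem' := fun hx hx' y hy => by
        rw [add_lie, hx y hy, hx' y hy, add_zero]
      zero_mem' := fun y hy => zero_lie y
      smul_mem' := fun c x hx y hy => by rw [smul_lie, hx y hy, smul_zero] }
  have hP : (⨆ α ∈ Δ1pos \ Δ2pos, gsp (-α) : Submodule ℂ g) ≤ P := by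
    apply iSup₂_le
    intro α hα x hx
    intro y hy
    let Q : Submodule ℂ g :=
      { carrier := {y | ⁅x, y⁆ = 0}
        add_mem' := fun {u v} hu hv => by
          simp only [Set.mem_setOf_eq] at *
          rw [lie_add, hu, hv, add_zero]
        zero_mem' := lie_zero x
        smul_mem' := fun c y hy => by
          simp only [Set.mem_setOf_eq] at *
          rw [lie_smul, hy, smul_zero] }
    have hQ : (⨆ β ∈ Δ2pos \ Δ1pos, gsp β : Submodule ℂ g) ≤ Q := by
      apply iSup₂_le
      intro β hβ y hy
      have hmem := hbr (-α) β x hx y hy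
      rw [key α hα β hβ] at hmem
      exact (Submodule.mem_bot ℂ).mp hmem
    exact hQ hy
  exact hP hx y hy
end

section
/- Let d(ℂ) be a complex Lie algebra with a semilinear involution σ, Q a σ-compatible ad-invariant nondegenerate symmetric bilinear form, and (g, W, d(ℂ)) a Manin triple with g and W both σ-invariant. Then (g^Γ, W^Γ, d(ℂ)^Γ), the triple of fixed-point real subalgebras, is a Manin triple over ℝ with respect to the restriction of Q. -/
open Complex

/-- let `d(ℂ)` be a complex Lie algebra with a semilinear involution `σ`
compatible with an ad-invariant nondegenerate symmetric bilinear form `Q`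
(`Q(σx, σy) = conj Q(x,y)`), and let `(g, W, d(ℂ))` be a Manin triple with `g`, `W`
both `σ`-invariant.  Then the fixed-point triple `(g^Γ, W^Γ, d(ℂ)^Γ)` is a Manin
triple over `ℝ` for the restriction of `Q`: `Q` is real-valued on fixed points,
`d^Γ = g^Γ ⊕ W^Γ`, the fixed subalgebras are isotropic and maximal isotropic, and the
restricted form is nondegenerate. -/
theorem fixed_points_manin_triple
    {d : Type*} [LieRing d] [LieAlgebra ℂ d]
    (Q : d →ₗ[ℂ] d →ₗ[ℂ] ℂ)
    (hsymm : ∀ x y : d, Q x y = Q y x)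
    (hadinv : ∀ x y z : d, Q ⁅x, y⁆ z + Q y ⁅x, z⁆ = 0)
    (hnd : ∀ x : d, (∀ y : d, Q x y = 0) → x = 0)
    (σ : d → d)
    (hadd : ∀ x y : d, σ (x + y) = σ x + σ y)
    (hsmul : ∀ (c : ℂ) (x : d), σ (c • x) = (starRingEnd ℂ) c • σ x)
    (hinvol : ∀ x : d, σ (σ x) = x)
    (hbr : ∀ x y : d, σ ⁅x, y⁆ = ⁅σ x, σ y⁆)
    (hQσ : ∀ x y : d, Q (σ x) (σ y) = (starRingEnd ℂ) (Q x y))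
    (gA W : LieSubalgebra ℂ d)
    (hsum : gA.toSubmodule ⊔ W.toSubmodule = ⊤)
    (hint : gA.toSubmodule ⊓ W.toSubmodule = ⊥)
    (hgiso : ∀ x ∈ gA, ∀ y ∈ gA, Q x y = 0)
    (hWiso : ∀ x ∈ W, ∀ y ∈ W, Q x y = 0)
    (hgmax : ∀ x : d, (∀ y ∈ gA, Q x y = 0) → x ∈ gA)
    (hWmax : ∀ x : d, (∀ y ∈ W, Q x y = 0) → x ∈ W)
    (hgσ : ∀ x ∈ gA, σ x ∈ gA)
    (hWσ : ∀ x ∈ W, σ x ∈ W) :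
    -- `Q` is real-valued on the fixed points
    (∀ x y : d, σ x = x → σ y = y → (Q x y).im = 0) ∧
    -- `d^Γ` is the direct sum of `g^Γ` and `W^Γ`
    (∀ x : d, σ x = x → ∃ a b : d, a ∈ gA ∧ σ a = a ∧ b ∈ W ∧ σ b = b ∧ x = a + b) ∧
    (∀ x : d, x ∈ gA → x ∈ W → x = 0) ∧
    -- `g^Γ` and `W^Γ` are maximal isotropic among fixed points
    (∀ x : d, σ x = x → (∀ y ∈ gA, σ y = y → Q x y = 0) → x ∈ gA) ∧
    (∀ x : d, σ x = x → (∀ y ∈ W, σ y = y → Q x y = 0) → x ∈ W) ∧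
    -- the restriction of `Q` to the fixed points is nondegenerate
    (∀ x : d, σ x = x → (∀ y : d, σ y = y → Q x y = 0) → x = 0) := by

  -- basic facts about σ
  have hσsub : ∀ x y : d, σ (x - y) = σ x - σ y := by
    intro x y
    have h1 : x - y = x + (-1 : ℂ) • y := by module
    rw [h1, hadd, hsmul]
    simp
    module
  -- the two fixed components of an arbitrary element
  have hfix1 : ∀ y : d, σ ((1/2 : ℂ) • (y + σ y)) = (1/2 : ℂ) • (y + σ y) := by
    intro y
    rw [hsmul, hadd, hinvol]
    have : (starRingEnd ℂ) (1/2 : ℂ) = 1/2 := by simp [Complex.ext_iff]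
    rw [this, add_comm (σ y) y]
  have hfix2 : ∀ y : d, σ ((-I/2 : ℂ) • (y - σ y)) = (-I/2 : ℂ) • (y - σ y) := by
    intro y
    rw [hsmul, hσsub, hinvol]
    have h2 : (starRingEnd ℂ) (-I/2 : ℂ) = I/2 := by
      rw [map_div₀, map_neg, Complex.conj_I, map_ofNat]; ring
    rw [h2]
    match_scalars <;> ring
  have hdec : ∀ y : d, y = (1/2 : ℂ) • (y + σ y) + I • ((-I/2 : ℂ) • (y - σ y)) := by
    intro y
    rw [smul_smul]
    have : (I : ℂ) * (-I/2) = 1/2 := by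
      simp [Complex.ext_iff]; norm_num
    rw [this]
    module
  -- Q x vanishes on all y once it vanishes on fixed points (relative version below)
  have hQsplit : ∀ x y : d, Q x y = Q x ((1/2 : ℂ) • (y + σ y)) + I * Q x ((-I/2 : ℂ) • (y - σ y)) := by
    intro x y
    conv_lhs => rw [hdec y]
    rw [map_add, map_smul]
    simp
  refine ⟨?_, ?_, ?_, ?_, ?_, ?_⟩
  · -- real-valued on fixed points
    intro x y hx hy
    have h := hQσ x y
    rw [hx, hy] at h
    have := Complex.conj_eq_iff_im.mp h.symm
    exact this
  · -- decomposition of fixed points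
    intro x hx
    have hxtop : x ∈ gA.toSubmodule ⊔ W.toSubmodule := by rw [hsum]; trivial
    obtain ⟨a, ha, b, hb, hab⟩ := Submodule.mem_sup.mp hxtop
    refine ⟨(1/2 : ℂ) • (a + σ a), (1/2 : ℂ) • (b + σ b), ?_, hfix1 a, ?_, hfix1 b, ?_⟩
    · exact Submodule.smul_mem gA.toSubmodule _ (Submodule.add_mem _ ha (hgσ a ha))
    · exact Submodule.smul_mem W.toSubmodule _ (Submodule.add_mem _ hb (hWσ b hb))
    · have hσx : σ a + σ b = a + b := by
        rw [← hadd, hab, hx, ← hab]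
      calc x = (1/2 : ℂ) • ((a + b) + (σ a + σ b)) := by
              rw [hσx, hab]; module
        _ = (1/2 : ℂ) • (a + σ a) + (1/2 : ℂ) • (b + σ b) := by module
  · -- trivial intersection
    intro x hxg hxW
    have : x ∈ gA.toSubmodule ⊓ W.toSubmodule := ⟨hxg, hxW⟩
    rw [hint] at this
    exact this
  · -- g^Γ maximal isotropic
    intro x hx hxQ
    apply hgmax
    intro y hy
    rw [hQsplit x y]
    have h1 : Q x ((1/2 : ℂ) • (y + σ y)) = 0 := by
      apply hxQ _ (Submodule.smul_mem gA.toSubmodule _ (Submodule.add_mem _ hy (hgσ y hy))) (hfix1 y)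
    have h2 : Q x ((-I/2 : ℂ) • (y - σ y)) = 0 := by
      apply hxQ _ (Submodule.smul_mem gA.toSubmodule _ (Submodule.sub_mem _ hy (hgσ y hy))) (hfix2 y)
    rw [h1, h2]; ring
  · -- W^Γ maximal isotropic
    intro x hx hxQ
    apply hWmax
    intro y hy
    rw [hQsplit x y]
    have h1 : Q x ((1/2 : ℂ) • (y + σ y)) = 0 := by
      apply hxQ _ (Submodule.smul_mem W.toSubmodule _ (Submodule.add_mem _ hy (hWσ y hy))) (hfix1 y)
    have h2 : Q x ((-I/2 : ℂ) • (y - σ y)) = 0 := by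
      apply hxQ _ (Submodule.smul_mem W.toSubmodule _ (Submodule.sub_mem _ hy (hWσ y hy))) (hfix2 y)
    rw [h1, h2]; ring
  · -- nondegeneracy on fixed points
    intro x hx hxQ
    apply hnd
    intro y
    rw [hQsplit x y, hxQ _ (hfix1 y), hxQ _ (hfix2 y)]
    ring
end

section
/- Suppose θ⁺ = Σ_{α∈Δ₁⁺} ξ_α E_α and μ₂ = Σ_{β∈Δ₂⁺\Δ₁⁺} η_β E_β are elements of a complex semisimple Lie algebra, where φ : Π₁ → Π₂ satisfies (i)-(iii) and acts on root vectors by φ(E_α) = E_{φ(α)}. If φ(θ⁺) = μ₂ + θ⁺, then θ⁺ = 0 and μ₂ = 0. -/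
/-- write `θ⁺ = Σ_{α ∈ Δ₁⁺} ξ_α E_α` and `μ₂ = Σ_{β ∈ Δ₂⁺\Δ₁⁺} η_β E_β`,
with the root vectors `E_γ` linearly independent, so that the elements are faithfully
encoded by their coefficient families `ξ` (supported on `Δ₁⁺`) and `η` (supported on
`Δ₂⁺ \ Δ₁⁺`).  The map `φ` acts by `φ(E_α) = E_{φ(α)}`; it is injective on `Δ₁⁺`, maps
`Δ₁⁺` into `Δ₂⁺`, and has no cycles (every element eventually leaves `Δ₁⁺`, by
condition (iii)).  If `φ(θ⁺) = μ₂ + θ⁺` then `θ⁺ = 0` and `μ₂ = 0`. -/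
theorem phi_theta_eq_mu_add_theta
    {V : Type*} [DecidableEq V]
    (Δ1 Δ2 : Finset V) (φ : V → V)
    (hinj : Set.InjOn φ (Δ1 : Set V))
    (hmaps : ∀ a ∈ Δ1, φ a ∈ Δ2)
    (hexit : ∀ a ∈ Δ1, ∃ k : ℕ, φ^[k] a ∉ Δ1)
    (ξ η : V →₀ ℂ)
    (hξ : ↑ξ.support ⊆ (Δ1 : Set V))
    (hη : ↑η.support ⊆ ((Δ2 : Set V) \ (Δ1 : Set V)))
    (heq : Finsupp.mapDomain φ ξ = η + ξ) :
    ξ = 0 ∧ η = 0 := by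
  classical
  -- exit time function
  have hξ0 : ξ = 0 := by
    by_contra h0
    have hne : ξ.support.Nonempty := Finsupp.support_nonempty_iff.mpr h0
    set g : V → ℕ := fun a => if h : a ∈ Δ1 then Nat.find (hexit a h) else 0 with hg
    obtain ⟨a, ha, hmax⟩ := ξ.support.exists_max_image g hne
    have haΔ : a ∈ Δ1 := hξ ha
    -- η a = 0
    have hηa : η a = 0 := by
      by_contra hc
      have : a ∈ η.support := Finsupp.mem_support_iff.mpr hc
      exact (hη this).2 haΔ
    -- mapDomain φ ξ a = ξ a ≠ 0
    have hmd : Finsupp.mapDomain φ ξ a ≠ 0 := by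
      rw [heq]
      simp only [Finsupp.add_apply, hηa, zero_add]
      exact Finsupp.mem_support_iff.mp ha
    have hmem : a ∈ (Finsupp.mapDomain φ ξ).support := Finsupp.mem_support_iff.mpr hmd
    have : a ∈ ξ.support.image φ := Finsupp.mapDomain_support hmem
    obtain ⟨b, hb, hba⟩ := Finset.mem_image.mp this
    have hbΔ : b ∈ Δ1 := hξ hb
    -- g b > g a, contradicting maximality
    have hgb : g b > g a := by
      simp only [hg, dif_pos haΔ, dif_pos hbΔ]
      by_contra hle
      push_neg at hle
      have hb1 : 1 ≤ Nat.find (hexit b hbΔ) := by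
        rcases Nat.eq_zero_or_pos (Nat.find (hexit b hbΔ)) with h | h
        · exact absurd (h ▸ Nat.find_spec (hexit b hbΔ)) (by simpa using hbΔ)
        · exact h
      have hspec : φ^[Nat.find (hexit b hbΔ)] b ∉ Δ1 := Nat.find_spec (hexit b hbΔ)
      have heqit : φ^[Nat.find (hexit b hbΔ)] b = φ^[Nat.find (hexit b hbΔ) - 1] a := by
        conv_lhs => rw [← Nat.succ_pred_eq_of_pos hb1]
        rw [Function.iterate_succ_apply, hba]
        rfl
      have hlt : Nat.find (hexit b hbΔ) - 1 < Nat.find (hexit a haΔ) :=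
        lt_of_lt_of_le (Nat.sub_lt hb1 one_pos) hle
      have := Nat.find_min (hexit a haΔ) hlt
      push_neg at this
      exact hspec (heqit ▸ this)
    exact absurd (hmax b hb) (not_le.mpr hgb)
  refine ⟨hξ0, ?_⟩
  rw [hξ0] at heq
  simpa using heq.symm
end
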